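/- arXiv:1405.4312 — 4 statements merged into one kernel-verified Lean document; each statement's English description precedes it below -/
import Mathlib

section
/- Let t_{n,k} be the number of permutations of {1,…,n} with k components (defined via the standard recursion). Then for n ≥ 2 and 2 ≤ s ≤ n, the identity t_{n+1,s} = (n−s+2)! + Σ_{j=s}^{n} (n+1−j)! (t_{j,s−1} − t_{j,s}) holds. -/
/-!
The recursion for `t_{·,1}` says `∑_{i=1}^{p} (p-i)! t_{i,1} = p!`. Convolving the recursion for
`t_{·,k}` with the factorials and using associativity of convolution therefore gives
`∑_{j=1}^{m} (m-j)! t_{j,k} = ∑_{l=1}^{m-1} (m-l)! t_{l,k-1}`.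
For `m = n + 1` and `k = s` the identity follows by splitting off the term `j = n + 1` on the left
and the term `l = s - 1` (where `t_{s-1,s-1} = 1`) on the right; the terms below vanish.
-/

open Finset

theorem sum_Icc_one_eq_sum_Icc_of_eq_zero {M : Type*} [AddCommMonoid M] {f : ℕ → M} {k : ℕ}
    (hk : 1 ≤ k) (hf : ∀ j < k, f j = 0) (m : ℕ) :
    ∑ j ∈ Icc 1 m, f j = ∑ j ∈ Icc k m, f j := by
  refine (sum_subset (fun j hj => ?_) fun j hj hjk => hf j ?_).symm
  · simp only [mem_Icc] at hj ⊢
    omega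
  · simp only [mem_Icc] at hj hjk
    omega

theorem sum_Icc_mul_convolution_assoc {R : Type*} [CommSemiring R] (f a b : ℕ → R) (m : ℕ) :
    ∑ j ∈ Icc 1 m, f (m - j) * ∑ i ∈ Icc 1 (j - 1), a i * b (j - i) =
      ∑ l ∈ Icc 1 (m - 1), (∑ i ∈ Icc 1 (m - l), f (m - l - i) * a i) * b l := by
  simp only [mul_sum, sum_mul, sum_sigma']
  refine sum_nbij' (fun p => ⟨p.1 - p.2, p.2⟩) (fun p => ⟨p.1 + p.2, p.2⟩) ?_ ?_ ?_ ?_ ?_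
  all_goals
    rintro ⟨j, i⟩ h
    simp only [mem_sigma, mem_Icc] at h
  all_goals try
    simp only [mem_sigma, mem_Icc, Sigma.mk.injEq, heq_eq_eq, and_true]
    omega
  rw [show m - (j - i) - i = m - j by omega]
  ring

namespace PermComponents

def FactorialRecursion (t : ℕ → ℕ → ℤ) : Prop :=
  ∀ n : ℕ, 1 ≤ n → t n 1 = n.factorial - ∑ j ∈ Icc 1 (n - 1), ((n - j).factorial : ℤ) * t j 1

def ConvolutionRecursion (t : ℕ → ℕ → ℤ) : Prop :=
  ∀ n k : ℕ, 2 ≤ k → k ≤ n → t n k = ∑ j ∈ Icc 1 (n - k + 1), t j 1 * t (n - j) (k - 1)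

def VanishesBelowDiagonal (t : ℕ → ℕ → ℤ) : Prop :=
  ∀ n k : ℕ, 1 ≤ k → n < k → t n k = 0

variable {t : ℕ → ℕ → ℤ}

theorem sum_factorial_mul_one (h1 : FactorialRecursion t) {p : ℕ} (hp : 1 ≤ p) :
    ∑ j ∈ Icc 1 p, ((p - j).factorial : ℤ) * t j 1 = p.factorial := by
  obtain ⟨q, rfl⟩ : ∃ q, p = q + 1 := ⟨p - 1, by omega⟩
  rw [sum_Icc_succ_top (by omega), h1 (q + 1) hp]
  simp

theorem apply_one_one (h1 : FactorialRecursion t) : t 1 1 = 1 := by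
  simpa using h1 1 le_rfl

theorem apply_self (h1 : FactorialRecursion t) (h2 : ConvolutionRecursion t) {k : ℕ}
    (hk : 1 ≤ k) : t k k = 1 := by
  induction k with
  | zero => omega
  | succ k ih =>
    rcases Nat.eq_zero_or_pos k with rfl | hk
    · exact apply_one_one h1
    · rw [h2 (k + 1) (k + 1) (by omega) le_rfl, Nat.sub_self, zero_add, Icc_self, sum_singleton,
        apply_one_one h1, Nat.add_sub_cancel, ih hk, one_mul]

theorem apply_eq_sum_Icc_sub_one (h2 : ConvolutionRecursion t) (h3 : VanishesBelowDiagonal t)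
    (j : ℕ) {k : ℕ} (hk : 2 ≤ k) :
    t j k = ∑ i ∈ Icc 1 (j - 1), t i 1 * t (j - i) (k - 1) := by
  by_cases hkj : k ≤ j
  · rw [h2 j k hk hkj]
    refine sum_subset (fun i hi => ?_) fun i hi hik => ?_
    · simp only [mem_Icc] at hi ⊢
      omega
    · simp only [mem_Icc] at hi hik
      rw [h3 (j - i) (k - 1) (by omega) (by omega), mul_zero]
  · rw [h3 j k (by omega) (by omega)]
    refine (sum_eq_zero fun i hi => ?_).symm
    simp only [mem_Icc] at hi
    rw [h3 (j - i) (k - 1) (by omega) (by omega), mul_zero]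

theorem sum_factorial_mul_eq_sum_factorial_mul_pred (h1 : FactorialRecursion t)
    (h2 : ConvolutionRecursion t) (h3 : VanishesBelowDiagonal t) (m : ℕ) {k : ℕ} (hk : 2 ≤ k) :
    ∑ j ∈ Icc 1 m, ((m - j).factorial : ℤ) * t j k =
      ∑ l ∈ Icc 1 (m - 1), ((m - l).factorial : ℤ) * t l (k - 1) := by
  simp_rw [apply_eq_sum_Icc_sub_one h2 h3 _ hk]
  refine (sum_Icc_mul_convolution_assoc (fun i => (i.factorial : ℤ)) (t · 1) (t · (k - 1)) m).trans
    (sum_congr rfl fun l hl => ?_)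
  simp only [mem_Icc] at hl
  rw [sum_factorial_mul_one h1 (by omega)]

end PermComponents

/-- For the numbers `t n k` of permutations of `{1,…,n}` with `k` components (defined via the
standard recursion), for `n ≥ 2` and `2 ≤ s ≤ n` one has
`t (n+1) s = (n-s+2)! + Σ_{j=s}^{n} (n+1-j)! (t j (s-1) - t j s)`. -/
theorem perm_components_identity
    (t : ℕ → ℕ → ℤ)
    (h1 : ∀ n : ℕ, 1 ≤ n →
      t n 1 = (Nat.factorial n : ℤ) -
        ∑ j ∈ Finset.Icc 1 (n - 1), (Nat.factorial (n - j) : ℤ) * t j 1)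
    (h2 : ∀ n k : ℕ, 2 ≤ k → k ≤ n →
      t n k = ∑ j ∈ Finset.Icc 1 (n - k + 1), t j 1 * t (n - j) (k - 1))
    (h3 : ∀ n k : ℕ, 1 ≤ k → n < k → t n k = 0) :
    ∀ n s : ℕ, 2 ≤ n → 2 ≤ s → s ≤ n →
      t (n + 1) s = (Nat.factorial (n - s + 2) : ℤ) +
        ∑ j ∈ Finset.Icc s n, (Nat.factorial (n + 1 - j) : ℤ) * (t j (s - 1) - t j s) := by
  intro n s _ hs hsn
  obtain ⟨r, rfl⟩ : ∃ r, s = r + 1 := ⟨s - 1, by omega⟩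
  have key := PermComponents.sum_factorial_mul_eq_sum_factorial_mul_pred h1 h2 h3 (n + 1) hs
  have vanish : ∀ k, 1 ≤ k → ∀ m, ∀ j < k, ((m - j).factorial : ℤ) * t j k = 0 :=
    fun k hk m j hj => by rw [h3 j k hk hj, mul_zero]
  have lhs : ∑ j ∈ Icc 1 (n + 1), ((n + 1 - j).factorial : ℤ) * t j (r + 1) =
      ∑ j ∈ Icc (r + 1) n, ((n + 1 - j).factorial : ℤ) * t j (r + 1) + t (n + 1) (r + 1) := by
    rw [sum_Icc_one_eq_sum_Icc_of_eq_zero (by omega) (vanish _ (by omega) _),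
      sum_Icc_succ_top (by omega), Nat.sub_self, Nat.factorial_zero, Nat.cast_one, one_mul]
  have rhs : ∑ j ∈ Icc 1 n, ((n + 1 - j).factorial : ℤ) * t j r =
      (n + 1 - r).factorial + ∑ j ∈ Icc (r + 1) n, ((n + 1 - j).factorial : ℤ) * t j r := by
    rw [sum_Icc_one_eq_sum_Icc_of_eq_zero (by omega) (vanish _ (by omega) _),
      ← add_sum_Ioc_eq_sum_Icc (by omega), ← Icc_add_one_left_eq_Ioc,
      PermComponents.apply_self h1 h2 (by omega), mul_one]
  rw [Nat.add_sub_cancel, Nat.add_sub_cancel, lhs, rhs] at key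
  rw [Nat.add_sub_cancel, show n - (r + 1) + 2 = n + 1 - r by omega]
  simp only [mul_sub, sum_sub_distrib]
  linarith
end

section
/- The number of indecomposable permutations of {1,…,n} (permutations with exactly one component), for n ≥ 2, equals n! + (−1)^{n−1} + Σ_{k=1}^{n−2} (−1)^k Σ_{j=1}^{n−k−1} C(k+1, j) (n−k−1+j)! Σ over compositions (s_1,…,s_j) with each s_i ≥ 2 and s_1+⋯+s_j = n−k−1+j of the reciprocal of the multinomial coefficient (n−k−1+j choose s_1,…,s_j). -/
/-!
Let `A = Σ_{n ≥ 1} n! Xⁿ` and `T = Σ_{n ≥ 1} t n Xⁿ`. The recurrence says `T = A - A T`, so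
`T = A / (1 + A) = Σ_{r ≥ 1} (-1)^(r-1) Aʳ`, and only `r ≤ n` contributes to the coefficient
of `Xⁿ`.
Splitting `A = X + S` with `S = Σ_{m ≥ 2} m! Xᵐ`, the binomial theorem gives
`[Xⁿ] Aʳ = Σ_j C(r, j) [X^(n-r+j)] Sʲ`, and `[Xᵐ] Sʲ` is the sum of `∏ sᵢ!` over the compositions
of `m` into `j` parts `≥ 2`, that is `m!` times the sum of the reciprocal multinomial coefficients.
The terms `r = 1` and `r = n` contribute `n!` and `(-1)^(n-1)`.
-/

open Finset

/-- The compositions `(s_1,…,s_j)` of `m` with each part `≥ 2`. -/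
def comps (j m : ℕ) : Finset (Fin j → ℕ) :=
  (Fintype.piFinset fun _ : Fin j => Finset.range (m + 1)).filter
    (fun f => (∀ i, 2 ≤ f i) ∧ ∑ i, f i = m)

namespace PowerSeries

variable {R : Type*}

theorem coeff_pow_eq_sum_piAntidiag [CommSemiring R] (φ : R⟦X⟧) (j m : ℕ) :
    coeff m (φ ^ j) = ∑ f ∈ piAntidiag (univ : Finset (Fin j)) m, ∏ i, coeff (f i) φ := by
  rw [← Fin.prod_const, coeff_prod]
  exact sum_equiv Finsupp.equivFunOnFinite (by simp) (by simp)

theorem coeff_X_add_pow [CommSemiring R] (φ : R⟦X⟧) {r n : ℕ} (hrn : r ≤ n) :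
    coeff n ((X + φ) ^ r) =
      ∑ j ∈ range (r + 1), (r.choose j : R) * coeff (n - r + j) (φ ^ j) := by
  rw [add_comm, add_pow, map_sum]
  refine sum_congr rfl fun j hj => ?_
  have hjr : j ≤ r := Nat.lt_succ_iff.mp (mem_range.mp hj)
  rw [mul_comm, mul_comm (φ ^ j), ← map_natCast (C (R := R)), coeff_C_mul, coeff_X_pow_mul',
    if_pos (by omega), show n - (r - j) = n - r + j by omega]

theorem coeff_pow_eq_zero_of_X_sq_dvd [CommSemiring R] {φ : R⟦X⟧} (hφ : X ^ 2 ∣ φ) {j m : ℕ}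
    (hm : m < 2 * j) : coeff m (φ ^ j) = 0 := by
  have : X ^ (2 * j) ∣ φ ^ j := pow_mul (X : R⟦X⟧) 2 j ▸ pow_dvd_pow_of_dvd hφ j
  exact X_pow_dvd_iff.mp this m hm

theorem coeff_eq_sum_neg_pow [CommRing R] {A T : R⟦X⟧} (hA : constantCoeff A = 0)
    (hT : T = A - A * T) (n : ℕ) :
    coeff n T = ∑ r ∈ range n, (-1) ^ r * coeff n (A ^ (r + 1)) := by
  -- Truncated geometric series; the error term `T * (-A) ^ n` is divisible by `X ^ (n + 1)`.
  have geom := mul_neg_geom_sum (-A) n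
  have key : A * ∑ i ∈ range n, (-A) ^ i = T - T * (-A) ^ n := by
    linear_combination T * geom - (∑ i ∈ range n, (-A) ^ i) * hT
  have hXT : X ∣ T := by
    rw [X_dvd_iff, hT, map_sub, map_mul, hA]; simp
  have hXA : X ^ n ∣ (-A) ^ n := pow_dvd_pow_of_dvd (by rwa [dvd_neg, X_dvd_iff]) n
  have tail : coeff n (T * (-A) ^ n) = 0 :=
    X_pow_dvd_iff.mp (pow_succ' (X : R⟦X⟧) n ▸ mul_dvd_mul hXT hXA) n (Nat.lt_succ_self n)
  have := congrArg (coeff n) key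
  rw [map_sub, tail, sub_zero, mul_sum, map_sum] at this
  rw [← this]
  refine sum_congr rfl fun r _ => ?_
  rw [neg_pow, mul_left_comm, ← pow_succ', show ((-1 : R⟦X⟧) ^ r) = C ((-1 : R) ^ r) by simp,
    coeff_C_mul]

theorem coeff_mul_eq_sum_Icc [CommSemiring R] {φ ψ : R⟦X⟧} (hφ : constantCoeff φ = 0)
    (hψ : constantCoeff ψ = 0) (n : ℕ) :
    coeff n (φ * ψ) = ∑ j ∈ Icc 1 (n - 1), coeff (n - j) φ * coeff j ψ := by
  rw [mul_comm, coeff_mul,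
    Nat.sum_antidiagonal_eq_sum_range_succ (fun i k => coeff i ψ * coeff k φ),
    ← sum_subset (s₁ := Icc 1 (n - 1)) (fun j hj => ?_) (fun j hj hj' => ?_)]
  · exact sum_congr rfl fun j _ => mul_comm _ _
  · simp only [mem_Icc, mem_range] at hj ⊢; omega
  · simp only [mem_Icc, mem_range] at hj hj'
    obtain rfl | rfl : j = 0 ∨ j = n := by omega
    · simp [hψ]
    · simp [hφ]

theorem coeff_X_add_pow_self [CommSemiring R] {φ : R⟦X⟧} (hφ : X ^ 2 ∣ φ) (n : ℕ) :
    coeff n ((X + φ) ^ n) = 1 := by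
  rw [coeff_X_add_pow φ le_rfl, sum_eq_single 0]
  · simp
  · intro j _ hj
    rw [coeff_pow_eq_zero_of_X_sq_dvd hφ (by omega), mul_zero]
  · simp

theorem coeff_X_add_pow_of_lt [CommSemiring R] {φ : R⟦X⟧} (hφ : X ^ 2 ∣ φ) {r n : ℕ}
    (hrn : r < n) :
    coeff n ((X + φ) ^ r) =
      ∑ j ∈ Icc 1 (n - r), (r.choose j : R) * coeff (n - r + j) (φ ^ j) := by
  have hchoose : ∀ j ∈ range (n + 1), j ∉ range (r + 1) →
      (r.choose j : R) * coeff (n - r + j) (φ ^ j) = 0 := fun j _ hj => by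
    rw [Nat.choose_eq_zero_of_lt (by simpa using hj), Nat.cast_zero, zero_mul]
  have hcoeff : ∀ j ∈ range (n + 1), j ∉ Icc 1 (n - r) →
      (r.choose j : R) * coeff (n - r + j) (φ ^ j) = 0 := fun j _ hj => by
    rcases Nat.eq_zero_or_pos j with rfl | hj0
    · simp [coeff_one, show n - r ≠ 0 by omega]
    · rw [coeff_pow_eq_zero_of_X_sq_dvd hφ (by simp only [mem_Icc] at hj; omega), mul_zero]
  rw [coeff_X_add_pow φ hrn.le, sum_subset (by simpa using hrn.le) hchoose,
    sum_subset (fun j hj => by simp only [mem_Icc, mem_range] at hj ⊢; omega) hcoeff]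

theorem eq_sum_neg_pow_of_recurrence [CommRing R] {A : R⟦X⟧} (hA : constantCoeff A = 0)
    {t : ℕ → R} (ht : ∀ n, 1 ≤ n → t n = coeff n A - ∑ j ∈ Icc 1 (n - 1), coeff (n - j) A * t j)
    {n : ℕ} (hn : 1 ≤ n) : t n = ∑ r ∈ range n, (-1) ^ r * coeff n (A ^ (r + 1)) := by
  -- `t 0` is unconstrained by the recurrence, so it is left out of the series.
  let T : R⟦X⟧ := mk fun n => if n = 0 then 0 else t n
  have hT0 : constantCoeff T = 0 := by simp [T, ← coeff_zero_eq_constantCoeff_apply]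
  have hT : T = A - A * T := by
    ext m
    rw [map_sub, coeff_mul_eq_sum_Icc hA hT0]
    rcases Nat.eq_zero_or_pos m with rfl | hm
    · simp [T, hA]
    · rw [coeff_mk, if_neg hm.ne', ht m hm]
      congr 1
      refine sum_congr rfl fun j hj => ?_
      simp [T, show j ≠ 0 by simp only [mem_Icc] at hj; omega]
  rw [← coeff_eq_sum_neg_pow hA hT, coeff_mk, if_neg (by omega)]

end PowerSeries

open PowerSeries
open scoped Nat

theorem mem_comps {j m : ℕ} {f : Fin j → ℕ} :
    f ∈ comps j m ↔ (∀ i, 2 ≤ f i) ∧ ∑ i, f i = m := by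
  refine mem_filter.trans (and_iff_right_of_imp fun h => Fintype.mem_piFinset.mpr fun i => ?_)
  exact mem_range.mpr (Nat.lt_succ_of_le (h.2 ▸ single_le_sum (by simp) (mem_univ i)))

noncomputable def factorialSeriesFromTwo (K : Type*) [Semiring K] : K⟦X⟧ :=
  mk fun m => if 2 ≤ m then (m ! : K) else 0

section factorialSeriesFromTwo

variable (K : Type*)

theorem X_sq_dvd_factorialSeriesFromTwo [Semiring K] : X ^ 2 ∣ factorialSeriesFromTwo K :=
  X_pow_dvd_iff.mpr fun m hm => by simp [factorialSeriesFromTwo, Nat.not_le.mpr hm]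

theorem constantCoeff_X_add_factorialSeriesFromTwo [Semiring K] :
    constantCoeff (X + factorialSeriesFromTwo K) = 0 := by
  rw [map_add, constantCoeff_X, zero_add, ← coeff_zero_eq_constantCoeff_apply]
  simp [factorialSeriesFromTwo]

theorem coeff_X_add_factorialSeriesFromTwo [Semiring K] {n : ℕ} (hn : 1 ≤ n) :
    coeff n (X + factorialSeriesFromTwo K) = (n ! : K) := by
  rcases hn.eq_or_lt with rfl | hn
  · simp [factorialSeriesFromTwo, coeff_X]
  · simp [factorialSeriesFromTwo, coeff_X, hn, show n ≠ 1 by omega]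

theorem coeff_factorialSeriesFromTwo_pow [CommSemiring K] (j m : ℕ) :
    coeff m (factorialSeriesFromTwo K ^ j) = ∑ f ∈ comps j m, ∏ i, ((f i)! : K) := by
  have hcomps : comps j m = (piAntidiag univ m).filter (fun f => ∀ i, 2 ≤ f i) := by
    ext f; simp [mem_comps, and_comm]
  rw [coeff_pow_eq_sum_piAntidiag, hcomps, sum_filter]
  refine sum_congr rfl fun f _ => ?_
  split_ifs with hf
  · exact prod_congr rfl fun i _ => by simp [factorialSeriesFromTwo, hf i]
  · obtain ⟨i, hi⟩ := not_forall.mp hf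
    exact prod_eq_zero (mem_univ i) (by simp [factorialSeriesFromTwo, hi])

theorem coeff_factorialSeriesFromTwo_pow_eq_mul_sum_inv_multinomial [Field K] [CharZero K]
    (j m : ℕ) :
    coeff m (factorialSeriesFromTwo K ^ j) =
      m ! * ∑ f ∈ comps j m, 1 / (Nat.multinomial univ f : K) := by
  rw [coeff_factorialSeriesFromTwo_pow, mul_sum]
  refine sum_congr rfl fun f hf => ?_
  have hspec : (∏ i, ((f i)! : K)) * Nat.multinomial univ f = m ! := by
    exact_mod_cast (mem_comps.mp hf).2 ▸ Nat.multinomial_spec univ f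
  have hpos : (Nat.multinomial univ f : K) ≠ 0 := by exact_mod_cast (Nat.multinomial_pos _ _).ne'
  rw [← hspec]
  field_simp

theorem coeff_X_add_factorialSeriesFromTwo_pow_of_lt [Field K] [CharZero K] {r n : ℕ}
    (hrn : r < n) :
    coeff n ((X + factorialSeriesFromTwo K) ^ r) =
      ∑ j ∈ Icc 1 (n - r), (r.choose j : K) * ((n - r + j)! : K) *
        ∑ f ∈ comps j (n - r + j), 1 / (Nat.multinomial univ f : K) := by
  rw [coeff_X_add_pow_of_lt (X_sq_dvd_factorialSeriesFromTwo K) hrn]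
  refine sum_congr rfl fun j _ => ?_
  rw [coeff_factorialSeriesFromTwo_pow_eq_mul_sum_inv_multinomial, mul_assoc]

end factorialSeriesFromTwo

/-- Closed form for the number `t n` of indecomposable permutations of `{1,…,n}` (permutations
with exactly one component), `n ≥ 2`:
`t n = n! + (-1)^(n-1) + Σ_{k=1}^{n-2} (-1)^k Σ_{j=1}^{n-k-1} C(k+1,j) (n-k-1+j)!
  Σ_{(s_1,…,s_j) comp. of n-k-1+j, s_i ≥ 2} 1/(n-k-1+j choose s_1,…,s_j)`. -/
theorem indecomposable_closed_form
    (t : ℕ → ℝ)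
    (h1 : ∀ n : ℕ, 1 ≤ n →
      t n = (Nat.factorial n : ℝ) -
        ∑ j ∈ Finset.Icc 1 (n - 1), (Nat.factorial (n - j) : ℝ) * t j) :
    ∀ n : ℕ, 2 ≤ n →
      t n = (Nat.factorial n : ℝ) + (-1 : ℝ) ^ (n - 1) +
        ∑ k ∈ Finset.Icc 1 (n - 2), (-1 : ℝ) ^ k *
          ∑ j ∈ Finset.Icc 1 (n - k - 1),
            (Nat.choose (k + 1) j : ℝ) * (Nat.factorial (n - k - 1 + j) : ℝ) *
              ∑ f ∈ comps j (n - k - 1 + j),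
                1 / (Nat.multinomial Finset.univ f : ℝ) := by
  intro n hn
  set A : ℝ⟦X⟧ := X + factorialSeriesFromTwo ℝ
  have hrec : ∀ l, 1 ≤ l → t l = coeff l A - ∑ j ∈ Icc 1 (l - 1), coeff (l - j) A * t j := by
    intro l hl
    rw [h1 l hl, coeff_X_add_factorialSeriesFromTwo ℝ hl]
    congr 1
    refine sum_congr rfl fun j hj => ?_
    rw [coeff_X_add_factorialSeriesFromTwo ℝ (by simp only [mem_Icc] at hj; omega)]
  obtain ⟨m, rfl⟩ : ∃ m, n = m + 2 := ⟨n - 2, by omega⟩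
  have hmiddle : ∀ k ∈ Icc 1 m, (-1 : ℝ) ^ k * coeff (m + 2) (A ^ (k + 1)) = (-1 : ℝ) ^ k *
      ∑ j ∈ Icc 1 (m + 2 - k - 1), ((k + 1).choose j : ℝ) * ((m + 2 - k - 1 + j)! : ℝ) *
        ∑ f ∈ comps j (m + 2 - k - 1 + j), 1 / (Nat.multinomial univ f : ℝ) := fun k hk => by
    rw [coeff_X_add_factorialSeriesFromTwo_pow_of_lt ℝ (by simp only [mem_Icc] at hk; omega),
      Nat.sub_sub]
  rw [eq_sum_neg_pow_of_recurrence (constantCoeff_X_add_factorialSeriesFromTwo ℝ) hrec (by omega),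
    sum_range_succ, sum_range_succ', range_eq_Ico,
    sum_Ico_add' (fun k => (-1 : ℝ) ^ k * coeff (m + 2) (A ^ (k + 1))) 0 m 1,
    zero_add, Ico_add_one_right_eq_Icc, sum_congr rfl hmiddle,
    coeff_X_add_pow_self (X_sq_dvd_factorialSeriesFromTwo ℝ), pow_zero, one_mul, pow_one,
    coeff_X_add_factorialSeriesFromTwo ℝ (by omega), show m + 2 - 2 = m by omega,
    show m + 2 - 1 = m + 1 by omega]
  ring
end

section
/- Let λ > μ > 0 and α > 0. The function f(t) = α (λ−μ)^{α/λ+1} e^{(λ−μ)t} / (λ e^{(λ−μ)t} − μ)^{α/λ+1} on (0,∞) is a probability density function, i.e., f(t) ≥ 0 for all t > 0 and ∫_0^∞ f(t) dt = 1, with cumulative distribution function F(t) = 1 − ((λ−μ)/(λ e^{(λ−μ)t} − μ))^{α/λ}. -/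
open MeasureTheory Real

/-!
With `c = λ - μ` and `g(t) = λ e^{ct} - μ`, which is `≥ c > 0` for `t ≥ 0`, the tail
`S(t) = c^{α/λ} g(t)^{-α/λ}` satisfies `S' = -(α/λ) c^{α/λ} g^{-α/λ-1} g' = -f` because
`g' = λ c e^{ct}`. Since `S(0) = 1` and `S(t) → 0` as `t → ∞`, the fundamental theorem of calculus
gives `∫_0^t f = 1 - S(t)` and `∫_0^∞ f = 1`, and `S(t) = (c / g(t))^{α/λ}`.
-/

open Filter Set Topology

theorem integral_eq_one_and_integral_Ioc_eq_one_sub_of_hasDerivAt {f S : ℝ → ℝ} {a : ℝ}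
    (hS : ∀ x ∈ Ici a, HasDerivAt S (-f x) x) (hf : ∀ x ∈ Ioi a, 0 ≤ f x) (hSa : S a = 1)
    (hS_tendsto : Tendsto S atTop (𝓝 0)) :
    (∫ t in Ioi a, f t) = 1 ∧ ∀ t, a < t → ∫ u in Ioc a t, f u = 1 - S t := by
  have hF : ∀ x ∈ Ici a, HasDerivAt (-S) (f x) x := fun x hx => by
    simpa only [neg_neg] using (hS x hx).neg
  refine ⟨?_, fun t ht => ?_⟩
  · rw [integral_Ioi_of_hasDerivAt_of_nonneg' hF hf (neg_zero (G := ℝ) ▸ hS_tendsto.neg),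
      Pi.neg_apply, hSa]
    ring
  · have hf_int : IntervalIntegrable f volume a t := by
      refine intervalIntegral.intervalIntegrable_deriv_of_nonneg (g := -S) ?_ ?_ ?_
      · rw [uIcc_of_le ht.le]
        exact fun x hx => (hF x hx.1).continuousAt.continuousWithinAt
      · rw [min_eq_left ht.le, max_eq_right ht.le]
        exact fun x hx => hF x hx.1.le
      · rw [min_eq_left ht.le, max_eq_right ht.le]
        exact fun x hx => hf x hx.1
    rw [← intervalIntegral.integral_of_le ht.le,
      intervalIntegral.integral_eq_sub_of_hasDerivAt
        (fun x hx => hF x (by rw [uIcc_of_le ht.le] at hx; exact hx.1)) hf_int,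
      Pi.neg_apply, Pi.neg_apply, hSa]
    ring

noncomputable def lambdaMuDensity (l m a t : ℝ) : ℝ :=
  a * (l - m) ^ (a / l + 1) * exp ((l - m) * t) / (l * exp ((l - m) * t) - m) ^ (a / l + 1)

noncomputable def lambdaMuTail (l m a t : ℝ) : ℝ :=
  (l - m) ^ (a / l) * (l * exp ((l - m) * t) - m) ^ (-(a / l))

section

variable {l m : ℝ}

theorem mul_exp_mul_sub_pos (hl : 0 ≤ l) (hml : m < l) {t : ℝ} (ht : 0 ≤ t) :
    0 < l * exp ((l - m) * t) - m := by
  have : 1 ≤ exp ((l - m) * t) := one_le_exp (mul_nonneg (sub_pos.2 hml).le ht)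
  nlinarith

theorem lambdaMuDensity_nonneg (hl : 0 ≤ l) (hml : m < l) {a : ℝ} (ha : 0 ≤ a) {t : ℝ}
    (ht : 0 ≤ t) : 0 ≤ lambdaMuDensity l m a t := by
  have := mul_exp_mul_sub_pos hl hml ht
  have := sub_pos.2 hml
  unfold lambdaMuDensity
  positivity

theorem hasDerivAt_lambdaMuTail (hl : l ≠ 0) (hml : m < l) (a : ℝ) {x : ℝ}
    (hx : 0 < l * exp ((l - m) * x) - m) :
    HasDerivAt (lambdaMuTail l m a) (-lambdaMuDensity l m a x) x := by
  have hc : 0 < l - m := sub_pos.2 hml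
  have hg : HasDerivAt (fun t => l * exp ((l - m) * t) - m)
      (l * (exp ((l - m) * x) * (l - m))) x := by
    simpa using ((((hasDerivAt_id x).const_mul (l - m)).exp).const_mul l).sub_const m
  refine ((hg.rpow_const (Or.inl hx.ne')).const_mul ((l - m) ^ (a / l))).congr_deriv ?_
  rw [lambdaMuDensity, rpow_add_one hc.ne', show -(a / l) - 1 = -(a / l + 1) by ring,
    rpow_neg hx.le]
  field_simp

theorem tendsto_lambdaMuTail_atTop (hl : 0 < l) (hml : m < l) {a : ℝ} (ha : 0 < a) :
    Tendsto (lambdaMuTail l m a) atTop (𝓝 0) := by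
  have hg : Tendsto (fun t => l * exp ((l - m) * t) - m) atTop atTop :=
    tendsto_atTop_add_const_right _ (-m)
      ((tendsto_exp_atTop.comp (tendsto_id.const_mul_atTop (sub_pos.2 hml))).const_mul_atTop hl)
  have := ((tendsto_rpow_neg_atTop (div_pos ha hl)).comp hg).const_mul ((l - m) ^ (a / l))
  rw [mul_zero] at this
  exact this

theorem lambdaMuTail_zero (hml : m < l) (a : ℝ) : lambdaMuTail l m a 0 = 1 := by
  simp only [lambdaMuTail, mul_zero, exp_zero, mul_one]
  rw [rpow_neg (sub_pos.2 hml).le, mul_inv_cancel₀ (rpow_pos_of_pos (sub_pos.2 hml) _).ne']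

theorem lambdaMuTail_eq_div_rpow (hl : 0 ≤ l) (hml : m < l) (a : ℝ) {t : ℝ} (ht : 0 ≤ t) :
    lambdaMuTail l m a t = ((l - m) / (l * exp ((l - m) * t) - m)) ^ (a / l) := by
  have hg := mul_exp_mul_sub_pos hl hml ht
  rw [lambdaMuTail, div_rpow (sub_pos.2 hml).le hg.le, rpow_neg hg.le]
  exact (div_eq_mul_inv _ _).symm

end

/-- For `λ > μ > 0` and `α > 0`, the function
`f(t) = α (λ-μ)^{α/λ+1} e^{(λ-μ)t} / (λ e^{(λ-μ)t} - μ)^{α/λ+1}` is a probability density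
on `(0,∞)`, with cumulative distribution function
`F(t) = 1 - ((λ-μ)/(λ e^{(λ-μ)t} - μ))^{α/λ}`. -/
theorem density_lambda_gt_mu (l m a : ℝ) (hm : 0 < m) (hml : m < l) (ha : 0 < a) :
    (∀ t : ℝ, 0 < t →
      0 ≤ a * (l - m) ^ (a / l + 1) * Real.exp ((l - m) * t) /
            (l * Real.exp ((l - m) * t) - m) ^ (a / l + 1)) ∧
    (∫ t in Set.Ioi (0 : ℝ),
        a * (l - m) ^ (a / l + 1) * Real.exp ((l - m) * t) /
          (l * Real.exp ((l - m) * t) - m) ^ (a / l + 1)) = 1 ∧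
    (∀ t : ℝ, 0 < t →
      (∫ u in Set.Ioc (0 : ℝ) t,
          a * (l - m) ^ (a / l + 1) * Real.exp ((l - m) * u) /
            (l * Real.exp ((l - m) * u) - m) ^ (a / l + 1)) =
        1 - ((l - m) / (l * Real.exp ((l - m) * t) - m)) ^ (a / l)) := by
  have hl : 0 < l := hm.trans hml
  obtain ⟨h_total, h_cdf⟩ :=
    integral_eq_one_and_integral_Ioc_eq_one_sub_of_hasDerivAt (f := lambdaMuDensity l m a)
      (fun x hx => hasDerivAt_lambdaMuTail hl.ne' hml a (mul_exp_mul_sub_pos hl.le hml hx))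
      (fun x hx => lambdaMuDensity_nonneg hl.le hml ha.le (le_of_lt hx))
      (lambdaMuTail_zero hml a) (tendsto_lambdaMuTail_atTop hl hml ha)
  refine ⟨fun t ht => lambdaMuDensity_nonneg hl.le hml ha.le ht.le, h_total, fun t ht => ?_⟩
  rw [← lambdaMuTail_eq_div_rpow hl.le hml a ht.le]
  exact h_cdf t ht
end

section
/- Let λ > μ > 0 and α > 0. Then the Laplace transform ∫_0^∞ e^{−st} ((λ−μ)/(λe^{(λ−μ)t} − μ))^{α/λ} dt equals λ((λ−μ)/λ)^{α/λ}/(λs + (λ−μ)α) · ₂F₁(α/λ, α/λ + s/(λ−μ); 1 + α/λ + s/(λ−μ); μ/λ), for all s > 0. -/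
/-!
Put `β = λ - μ`, `ν = α/λ`. Since `λ e^{βt} - μ = λ e^{βt} (1 - (μ/λ) e^{-βt})`, the binomial
series `(1 - x)^{-ν} = ∑ (ν)_n xⁿ/n!` turns the integrand into `∑ K_n e^{-(s + β(ν+n))t}` with
nonnegative `K_n = (β/λ)^ν (ν)_n (μ/λ)ⁿ/n!`. Integrating term by term gives `∑ K_n/(s + β(ν+n))`,
and with `c = ν + s/β` the identity `(1+c)_n c = (c)_n (c+n)` rewrites `1/(c+n)` as
`(c)_n / (c (1+c)_n)`, which is the hypergeometric series.
-/

open MeasureTheory Real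

/-- Rising factorial (Pochhammer symbol) `(a)_n`. -/
noncomputable def poch (a : ℝ) (n : ℕ) : ℝ := ∏ i ∈ Finset.range n, (a + i)

lemma poch_eq_ascPochhammer_eval (a : ℝ) (n : ℕ) : poch a n = (ascPochhammer ℝ n).eval a := by
  induction n with
  | zero => simp [poch]
  | succ n ih => rw [poch, Finset.prod_range_succ, ← poch, ih, ascPochhammer_succ_eval]

lemma poch_pos {a : ℝ} (ha : 0 < a) (n : ℕ) : 0 < poch a n :=
  Finset.prod_pos fun _ _ => by positivity

lemma poch_one_add_mul (c : ℝ) (n : ℕ) : poch (1 + c) n * c = poch c n * (c + n) := by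
  rw [poch, poch, ← Finset.prod_range_succ (fun i : ℕ => c + i), Finset.prod_range_succ']
  push_cast
  simp only [add_zero, add_assoc, add_comm (1 : ℝ)]

lemma choose_add_sub_one_eq_poch_div_factorial (a : ℝ) (n : ℕ) :
    Ring.choose (a + n - 1) n = poch a n / n.factorial := by
  rw [Ring.choose_eq_smul, Polynomial.descPochhammer_smeval_eq_ascPochhammer,
    Polynomial.ascPochhammer_smeval_eq_eval, poch_eq_ascPochhammer_eval, smul_eq_mul,
    div_eq_inv_mul]
  congr 2; ring

theorem hasSum_poch_div_factorial_mul_pow (a : ℝ) {x : ℝ} (hx : |x| < 1) :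
    HasSum (fun n => poch a n / n.factorial * x ^ n) ((1 - x) ^ (-a)) := by
  have h := (one_div_one_sub_rpow_hasFPowerSeriesOnBall_zero a).hasSum (y := x)
    (by simpa [enorm_eq_nnnorm, ← NNReal.coe_lt_one] using hx)
  have h1x : 0 ≤ 1 - x := by linarith [le_abs_self x]
  simpa [FormalMultilinearSeries.ofScalars_apply_eq, choose_add_sub_one_eq_poch_div_factorial,
    rpow_neg h1x, mul_comm] using h

lemma integral_exp_neg_mul_Ioi_zero {c : ℝ} (hc : 0 < c) :
    ∫ t in Set.Ioi (0 : ℝ), exp (-c * t) = c⁻¹ := by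
  rw [integral_exp_mul_Ioi (neg_lt_zero.mpr hc)]
  simp

theorem integral_Ioi_tsum_mul_exp_neg {K c : ℕ → ℝ} (hc : ∀ n, 0 < c n)
    (hK : Summable fun n => |K n| / c n) :
    ∫ t in Set.Ioi (0 : ℝ), ∑' n, K n * exp (-c n * t) = ∑' n, K n / c n := by
  have hint : ∀ n, IntegrableOn (fun t => K n * exp (-c n * t)) (Set.Ioi 0) := fun n =>
    (exp_neg_integrableOn_Ioi 0 (hc n)).const_mul (K n)
  have hnorm : ∀ n, ∫ t in Set.Ioi (0 : ℝ), ‖K n * exp (-c n * t)‖ = |K n| / c n := fun n => by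
    simp only [norm_mul, Real.norm_eq_abs, abs_exp, integral_const_mul,
      integral_exp_neg_mul_Ioi_zero (hc n), div_eq_mul_inv]
  rw [← integral_tsum_of_summable_integral_norm hint (by simpa only [hnorm] using hK)]
  refine tsum_congr fun n => ?_
  rw [integral_const_mul, integral_exp_neg_mul_Ioi_zero (hc n), div_eq_mul_inv]

theorem hasSum_exp_mul_rpow_div_exp_sub {l m s t : ℝ} (ν : ℝ) (hm : |m| < l) (ht : 0 ≤ t) :
    HasSum (fun n : ℕ => ((l - m) / l) ^ ν * (poch ν n / n.factorial * (m / l) ^ n) *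
        exp (-(s + (l - m) * (ν + n)) * t))
      (exp (-s * t) * ((l - m) / (l * exp ((l - m) * t) - m)) ^ ν) := by
  have hl : 0 < l := (abs_nonneg m).trans_lt hm
  have hβ : 0 < l - m := by linarith [le_abs_self m]
  set q := exp (-((l - m) * t)) with hq
  have hq0 : 0 < q := exp_pos _
  have hq1 : q ≤ 1 := exp_le_one_iff.mpr (by nlinarith)
  have hqinv : exp ((l - m) * t) * q = 1 := by rw [hq, ← exp_add, add_neg_cancel, exp_zero]
  have hx : |m / l * q| < 1 := by
    rw [abs_mul, abs_div, abs_of_pos hl, abs_of_pos hq0]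
    calc |m| / l * q ≤ |m| / l := mul_le_of_le_one_right (by positivity) hq1
      _ < 1 := (div_lt_one hl).mpr hm
  have h1x : 0 < 1 - m / l * q := by linarith [le_abs_self (m / l * q)]
  have hsplit : (l - m) / (l * exp ((l - m) * t) - m) = (l - m) / l * q * (1 - m / l * q)⁻¹ := by
    have hE : exp ((l - m) * t) = q⁻¹ := eq_inv_of_mul_eq_one_left hqinv
    rw [hE]
    field_simp
  have hsum : exp (-s * t) * ((l - m) / (l * exp ((l - m) * t) - m)) ^ ν =
      exp (-s * t) * ((l - m) / l) ^ ν * q ^ ν * (1 - m / l * q) ^ (-ν) := by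
    rw [hsplit, mul_rpow (by positivity) (by positivity), mul_rpow (by positivity) hq0.le,
      inv_rpow h1x.le, rpow_neg h1x.le]
    ring
  rw [hsum]
  refine ((hasSum_poch_div_factorial_mul_pow ν hx).mul_left
    (exp (-s * t) * ((l - m) / l) ^ ν * q ^ ν)).congr_fun fun n => ?_
  have hexp : exp (-(s + (l - m) * (ν + n)) * t) = exp (-s * t) * q ^ ν * q ^ n := by
    rw [hq, ← exp_mul, ← exp_nat_mul, ← exp_add, ← exp_add]
    ring_nf
  rw [hexp, mul_pow]
  ring

lemma poch_div_factorial_mul_pow_div_add (ν r : ℝ) {c : ℝ} (hc : 0 < c) (n : ℕ) :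
    poch ν n / n.factorial * r ^ n / (c + n) =
      c⁻¹ * (poch ν n * poch c n / (poch (1 + c) n * n.factorial) * r ^ n) := by
  have := poch_pos (by positivity : 0 < 1 + c) n
  have := poch_one_add_mul c n
  field_simp
  linear_combination (poch ν n * r ^ n) * this

/-- For `λ > μ > 0`, `α > 0` and `s > 0`, the Laplace transform
`∫_0^∞ e^{-st} ((λ-μ)/(λe^{(λ-μ)t} - μ))^{α/λ} dt` equals
`λ((λ-μ)/λ)^{α/λ}/(λs + (λ-μ)α) ₂F₁(α/λ, α/λ+s/(λ-μ); 1+α/λ+s/(λ-μ); μ/λ)`. -/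
theorem laplace_transform_hypergeom (l m a : ℝ) (hm : 0 < m) (hml : m < l) (ha : 0 < a) :
    ∀ s : ℝ, 0 < s →
      (∫ t in Set.Ioi (0 : ℝ),
          Real.exp (-s * t) * ((l - m) / (l * Real.exp ((l - m) * t) - m)) ^ (a / l)) =
        l * ((l - m) / l) ^ (a / l) / (l * s + (l - m) * a) *
          ∑' n : ℕ,
            poch (a / l) n * poch (a / l + s / (l - m)) n /
              (poch (1 + a / l + s / (l - m)) n * (Nat.factorial n : ℝ)) * (m / l) ^ n := by
  intro s hs
  have hl : 0 < l := hm.trans hml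
  have hβ : 0 < l - m := sub_pos.mpr hml
  have hν : 0 < a / l := div_pos ha hl
  have hrate : ∀ n : ℕ, s + (l - m) * (a / l + n) = (l - m) * ((a / l + s / (l - m)) + n) := by
    intro n; field_simp; ring
  have hrate_pos : ∀ n : ℕ, 0 < s + (l - m) * (a / l + n) := fun n => by positivity
  have hexpand := fun t (ht : t ∈ Set.Ioi (0 : ℝ)) =>
    (hasSum_exp_mul_rpow_div_exp_sub (s := s) (a / l) (abs_lt.mpr ⟨by linarith, hml⟩)
      (le_of_lt ht)).tsum_eq.symm
  have hsummable : Summable fun n : ℕ =>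
      |((l - m) / l) ^ (a / l) * (poch (a / l) n / n.factorial * (m / l) ^ n)| /
        (s + (l - m) * (a / l + n)) := by
    have hr : |m / l| < 1 := by rw [abs_of_pos (div_pos hm hl)]; exact (div_lt_one hl).mpr hml
    refine (((hasSum_poch_div_factorial_mul_pow (a / l) hr).summable.mul_left
      (((l - m) / l) ^ (a / l))).div_const s).of_nonneg_of_le (fun n => by positivity) fun n => ?_
    have := (poch_pos hν n).le
    rw [abs_of_nonneg (by positivity)]
    exact div_le_div_of_nonneg_left (by positivity) hs (le_add_of_nonneg_right (by positivity))
  rw [setIntegral_congr_fun measurableSet_Ioi hexpand,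
    integral_Ioi_tsum_mul_exp_neg hrate_pos hsummable, ← tsum_mul_left]
  refine tsum_congr fun n => ?_
  rw [hrate n, mul_div_mul_comm, poch_div_factorial_mul_pow_div_add _ _ (by positivity),
    add_assoc]
  field_simp
  ring
end
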